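/- arXiv:2408.12010 — 5 statements merged into one kernel-verified Lean document; each statement's English description precedes it below -/
import Mathlib

section
/- Let S be a finite type, P : S → ℝ a probability mass function with P(s) > 0 for all s, F : S → ℝ a probability mass function, ε ≥ 0 a real number, and δ ∈ [0,1). If F(s) ≥ exp(−ε) · P(s) for all s ∈ S and ∑_{s ∈ S} F(s) · (F(s)/P(s)) ≤ δ · exp(ε), then ∑_{s ∈ S, exp(−ε) ≤ F(s)/P(s) ≤ exp(ε)} F(s) ≥ 1 − δ; that is, under the distribution F, the event that the ratio F(S)/P(S) lies in [exp(−ε), exp(ε)] has probability at least 1 − δ. -/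
open Finset
open scoped Classical

/-!
Since `F ≥ e^{-ε} P`, the ratio `F/P` never falls below the band, so the complement of the
band is the event `F/P > e^ε`. Markov's inequality for the ratio under `F` bounds the
`F`-mass of that event by `E_F[F/P] / e^ε ≤ δ`.
-/

theorem Finset.mul_sum_filter_lt_le_sum_mul {ι R : Type*} [CommSemiring R] [PartialOrder R]
    [IsOrderedRing R] (s : Finset ι) (f g : ι → R) (t : R) [DecidablePred fun i => t < g i]
    (hf : ∀ i ∈ s, 0 ≤ f i) (hg : ∀ i ∈ s, 0 ≤ g i) :
    t * ∑ i ∈ s with t < g i, f i ≤ ∑ i ∈ s, f i * g i :=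
  calc t * ∑ i ∈ s with t < g i, f i
      = ∑ i ∈ s with t < g i, f i * t := by rw [mul_sum]; simp only [mul_comm]
    _ ≤ ∑ i ∈ s with t < g i, f i * g i :=
        sum_le_sum fun i hi => mul_le_mul_of_nonneg_left (mem_filter.1 hi).2.le
          (hf i (mem_filter.1 hi).1)
    _ ≤ ∑ i ∈ s, f i * g i :=
        sum_le_sum_of_subset_of_nonneg (filter_subset _ s) fun i hi _ =>
          mul_nonneg (hf i hi) (hg i hi)

theorem ratio_in_band_high_probability_general
    {S : Type*} [Fintype S]
    (P F : S → ℝ)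
    (hP_pos : ∀ s, 0 < P s)
    (hF_nonneg : ∀ s, 0 ≤ F s) (hF_sum : ∑ s, F s = 1)
    (ε δ : ℝ)
    (hlow : ∀ s, F s ≥ Real.exp (-ε) * P s)
    (hexp : ∑ s, F s * (F s / P s) ≤ δ * Real.exp ε) :
    ∑ s ∈ Finset.univ.filter
        (fun s => Real.exp (-ε) ≤ F s / P s ∧ F s / P s ≤ Real.exp ε), F s
      ≥ 1 - δ := by
  have hband : univ.filter (fun s => Real.exp (-ε) ≤ F s / P s ∧ F s / P s ≤ Real.exp ε) =
      univ.filter (fun s => F s / P s ≤ Real.exp ε) :=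
    filter_congr fun s _ => and_iff_right ((le_div_iff₀ (hP_pos s)).2 (hlow s))
  have hmarkov := univ.mul_sum_filter_lt_le_sum_mul F (fun s => F s / P s) (Real.exp ε)
    (fun s _ => hF_nonneg s) (fun s _ => div_nonneg (hF_nonneg s) (hP_pos s).le)
  have hout : ∑ s with Real.exp ε < F s / P s, F s ≤ δ :=
    le_of_mul_le_mul_left (by linarith) (Real.exp_pos ε)
  have hsplit := sum_filter_add_sum_filter_not univ (fun s => F s / P s ≤ Real.exp ε) F
  simp only [not_le] at hsplit
  rw [hband]
  linarith

/-- Lemma on posterior-to-prior ratios (finite version of Lemma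
`probabilistic_representation1`): if `F(s) ≥ e^{-ε}·P(s)` pointwise and the
expected ratio `E_F[F(S)/P(S)] ≤ δ·e^ε`, then under `F` the event that the
ratio `F(S)/P(S)` lies in `[e^{-ε}, e^ε]` has probability at least `1 - δ`. -/
theorem ratio_in_band_high_probability
    {S : Type*} [Fintype S]
    (P F : S → ℝ)
    (hP_pos : ∀ s, 0 < P s) (hP_sum : ∑ s, P s = 1)
    (hF_nonneg : ∀ s, 0 ≤ F s) (hF_sum : ∑ s, F s = 1)
    (ε δ : ℝ) (hε : 0 ≤ ε) (hδ : δ ∈ Set.Ico (0 : ℝ) 1)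
    (hlow : ∀ s, F s ≥ Real.exp (-ε) * P s)
    (hexp : ∑ s, F s * (F s / P s) ≤ δ * Real.exp ε) :
    ∑ s ∈ Finset.univ.filter
        (fun s => Real.exp (-ε) ≤ F s / P s ∧ F s / P s ≤ Real.exp ε), F s
      ≥ 1 - δ :=
  ratio_in_band_high_probability_general P F hP_pos hF_nonneg hF_sum ε δ hlow hexp
end

section
/- Let ε ≥ 0, let p ∈ (0,1), let Y be a finite type, and let ψ_0, ψ_1 : Y → ℝ be probability mass functions with ψ_0(y) > 0 and ψ_1(y) > 0 for all y. For each y define the Bayes posterior J(s_0|y) = p·ψ_0(y)/(p·ψ_0(y) + (1−p)·ψ_1(y)) and J(s_1|y) = (1−p)·ψ_1(y)/(p·ψ_0(y) + (1−p)·ψ_1(y)). Suppose that for all y, exp(−ε) ≤ J(s_0|y)/p ≤ exp(ε) and exp(−ε) ≤ J(s_1|y)/(1−p) ≤ exp(ε). Then for every subset W ⊆ Y, ∑_{y ∈ W} ψ_0(y) ≤ (1 + (exp(ε) − 1)/min(p, 1−p)) · ∑_{y ∈ W} ψ_1(y), and symmetrically ∑_{y ∈ W} ψ_1(y) ≤ (1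 + (exp(ε) − 1)/min(p, 1−p)) · ∑_{y ∈ W} ψ_0(y); that is, the mechanism is (log(1 + (exp(ε) − 1)/min(p, 1−p)), 0)-indistinguishable for the pair of secrets. -/
/-!
With evidence `D y = p ψ0 y + (1 - p) ψ1 y`, the lower bound `e^{-ε} ≤ J(s₁|y)/(1-p)` says
`ψ1 y / D y ≥ e^{-ε}`, i.e. `p ψ0 y + (1 - p) ψ1 y ≤ e^ε ψ1 y`, which rearranges to
`ψ0 y ≤ (1 + (e^ε - 1)/p) ψ1 y`. Symmetrically for `s₀`; replacing the prior by `min p (1 - p)`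
only enlarges the factor, and summing over `W` gives both inequalities.
-/

open Finset

theorem le_one_add_div_mul_of_inv_le_posterior_div_prior {a b m c x y : ℝ} (hm : 0 < m)
    (hma : m ≤ a) (hb : 0 < b) (hab : a + b = 1) (hc : 1 ≤ c) (hy : 0 ≤ y)
    (hD : 0 < a * x + b * y) (h : c⁻¹ ≤ b * y / (a * x + b * y) / b) :
    x ≤ (1 + (c - 1) / m) * y := by
  have ha : 0 < a := hm.trans_le hma
  obtain rfl : b = 1 - a := by linarith
  have hpost : (1 - a) * y / (a * x + (1 - a) * y) / (1 - a) = y / (a * x + (1 - a) * y) := by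
    field_simp
  have hevidence : a * x + (1 - a) * y ≤ c * y := by
    rw [hpost, le_div_iff₀ hD, inv_mul_le_iff₀ (by linarith)] at h
    exact h
  calc x ≤ (1 + (c - 1) / a) * y := by
        rw [one_add_div ha.ne', div_mul_eq_mul_div, le_div_iff₀ ha]
        linarith
    _ ≤ (1 + (c - 1) / m) * y := by gcongr

theorem posterior_band_implies_indistinguishability_general
    {Y : Type*} [Fintype Y]
    (ψ0 ψ1 : Y → ℝ)
    (h0_pos : ∀ y, 0 < ψ0 y) (h1_pos : ∀ y, 0 < ψ1 y)
    (p ε : ℝ) (hp : p ∈ Set.Ioo (0 : ℝ) 1) (hε : 0 ≤ ε)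
    (hJ0 : ∀ y,
      Real.exp (-ε) ≤ (p * ψ0 y / (p * ψ0 y + (1 - p) * ψ1 y)) / p ∧
      (p * ψ0 y / (p * ψ0 y + (1 - p) * ψ1 y)) / p ≤ Real.exp ε)
    (hJ1 : ∀ y,
      Real.exp (-ε) ≤ ((1 - p) * ψ1 y / (p * ψ0 y + (1 - p) * ψ1 y)) / (1 - p) ∧
      ((1 - p) * ψ1 y / (p * ψ0 y + (1 - p) * ψ1 y)) / (1 - p) ≤ Real.exp ε) :
    ∀ W : Finset Y,
      (∑ y ∈ W, ψ0 y ≤ (1 + (Real.exp ε - 1) / min p (1 - p)) * ∑ y ∈ W, ψ1 y) ∧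
      (∑ y ∈ W, ψ1 y ≤ (1 + (Real.exp ε - 1) / min p (1 - p)) * ∑ y ∈ W, ψ0 y) := by
  obtain ⟨hp0, hp1⟩ := hp
  have hq0 : 0 < 1 - p := sub_pos.mpr hp1
  have hm : 0 < min p (1 - p) := lt_min hp0 hq0
  have hc : 1 ≤ Real.exp ε := Real.one_le_exp hε
  have hD : ∀ y, 0 < p * ψ0 y + (1 - p) * ψ1 y := fun y =>
    add_pos (mul_pos hp0 (h0_pos y)) (mul_pos hq0 (h1_pos y))
  have h01 : ∀ y, ψ0 y ≤ (1 + (Real.exp ε - 1) / min p (1 - p)) * ψ1 y := fun y =>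
    le_one_add_div_mul_of_inv_le_posterior_div_prior hm (min_le_left _ _) hq0 (by ring) hc
      (h1_pos y).le (hD y) (Real.exp_neg ε ▸ (hJ1 y).1)
  have h10 : ∀ y, ψ1 y ≤ (1 + (Real.exp ε - 1) / min p (1 - p)) * ψ0 y := by
    intro y
    have hJ := (hJ0 y).1
    rw [Real.exp_neg, add_comm] at hJ
    exact le_one_add_div_mul_of_inv_le_posterior_div_prior hm (min_le_right _ _) hp0 (by ring)
      hc (h0_pos y).le (add_comm (p * ψ0 y) _ ▸ hD y) hJ
  intro W
  simp only [mul_sum]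
  exact ⟨sum_le_sum fun y _ => h01 y, sum_le_sum fun y _ => h10 y⟩

/-- Two-point Bayesian model (finite version of Lemma `semantic_secure_1`):
if the Bayes posterior-to-prior ratios for both secrets lie in
`[e^{-ε}, e^ε]` for every output, then the two conditional output laws are
`(log(1 + (e^ε - 1)/min(p, 1-p)), 0)`-indistinguishable. -/
theorem posterior_band_implies_indistinguishability
    {Y : Type*} [Fintype Y]
    (ψ0 ψ1 : Y → ℝ)
    (h0_pos : ∀ y, 0 < ψ0 y) (h1_pos : ∀ y, 0 < ψ1 y)
    (h0_sum : ∑ y, ψ0 y = 1) (h1_sum : ∑ y, ψ1 y = 1)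
    (p ε : ℝ) (hp : p ∈ Set.Ioo (0 : ℝ) 1) (hε : 0 ≤ ε)
    (hJ0 : ∀ y,
      Real.exp (-ε) ≤ (p * ψ0 y / (p * ψ0 y + (1 - p) * ψ1 y)) / p ∧
      (p * ψ0 y / (p * ψ0 y + (1 - p) * ψ1 y)) / p ≤ Real.exp ε)
    (hJ1 : ∀ y,
      Real.exp (-ε) ≤ ((1 - p) * ψ1 y / (p * ψ0 y + (1 - p) * ψ1 y)) / (1 - p) ∧
      ((1 - p) * ψ1 y / (p * ψ0 y + (1 - p) * ψ1 y)) / (1 - p) ≤ Real.exp ε) :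
    ∀ W : Finset Y,
      (∑ y ∈ W, ψ0 y ≤ (1 + (Real.exp ε - 1) / min p (1 - p)) * ∑ y ∈ W, ψ1 y) ∧
      (∑ y ∈ W, ψ1 y ≤ (1 + (Real.exp ε - 1) / min p (1 - p)) * ∑ y ∈ W, ψ0 y) :=
  posterior_band_implies_indistinguishability_general ψ0 ψ1 h0_pos h1_pos p ε hp hε hJ0 hJ1
end

section
/- Let (Ω, 𝔉) be a measurable space and let μ and ν be probability measures on Ω with μ absolutely continuous with respect to ν. Let ε ∈ ℝ and δ ∈ [0,1]. If μ({ω : (dμ/dν)(ω) ≤ exp(ε)}) ≥ 1 − δ, where dμ/dν denotes the Radon–Nikodym derivative of μ with respect to ν, then for every measurable set W ⊆ Ω, μ(W) ≤ exp(ε) · ν(W) + δ. -/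
/-!
Split `W` along the event `E = {dμ/dν ≤ e^ε}`. On `W ∩ E` the density is at most `e^ε`, so
`μ (W ∩ E) = ∫_{W ∩ E} dμ/dν dν ≤ e^ε ν W`; the rest of `W` lies in `Eᶜ`, whose `μ`-mass is
at most `δ` by hypothesis.
-/

open MeasureTheory

namespace MeasureTheory

lemma Measure.measure_inter_setOf_rnDeriv_le {Ω : Type*} [MeasurableSpace Ω]
    {μ ν : Measure Ω} [μ.HaveLebesgueDecomposition ν] [SFinite ν] (hac : μ ≪ ν)
    (c : ENNReal) (W : Set Ω) :
    μ (W ∩ {ω | μ.rnDeriv ν ω ≤ c}) ≤ c * ν W :=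
  calc μ (W ∩ {ω | μ.rnDeriv ν ω ≤ c})
      = ∫⁻ ω in W ∩ {ω | μ.rnDeriv ν ω ≤ c}, μ.rnDeriv ν ω ∂ν :=
        (Measure.setLIntegral_rnDeriv hac _).symm
    _ ≤ ∫⁻ _ in W ∩ {ω | μ.rnDeriv ν ω ≤ c}, c ∂ν :=
        setLIntegral_mono measurable_const fun _ hω ↦ hω.2
    _ = c * ν (W ∩ {ω | μ.rnDeriv ν ω ≤ c}) := setLIntegral_const _ _
    _ ≤ c * ν W := by gcongr; exact Set.inter_subset_left

lemma prob_compl_le_ofReal_of_ofReal_one_sub_le {Ω : Type*} [MeasurableSpace Ω]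
    {μ : Measure Ω} [IsProbabilityMeasure μ] {s : Set Ω} (hs : NullMeasurableSet s μ) {δ : ℝ}
    (h : ENNReal.ofReal (1 - δ) ≤ μ s) : μ sᶜ ≤ ENNReal.ofReal δ := by
  rw [prob_compl_eq_one_sub₀ hs, tsub_le_iff_right]
  calc (1 : ENNReal) = ENNReal.ofReal (δ + (1 - δ)) := by simp
    _ ≤ ENNReal.ofReal δ + ENNReal.ofReal (1 - δ) := ENNReal.ofReal_add_le
    _ ≤ ENNReal.ofReal δ + μ s := by gcongr

end MeasureTheory

theorem plrv_bound_implies_indistinguishability_general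
    {Ω : Type*} [MeasurableSpace Ω]
    (μ ν : Measure Ω) [IsProbabilityMeasure μ] [IsProbabilityMeasure ν]
    (hac : μ ≪ ν) (ε δ : ℝ)
    (h : ENNReal.ofReal (1 - δ) ≤
      μ {ω | μ.rnDeriv ν ω ≤ ENNReal.ofReal (Real.exp ε)}) :
    ∀ W : Set Ω, MeasurableSet W →
      μ W ≤ ENNReal.ofReal (Real.exp ε) * ν W + ENNReal.ofReal δ := by
  intro W _
  set E := {ω | μ.rnDeriv ν ω ≤ ENNReal.ofReal (Real.exp ε)}
  have hE : MeasurableSet E := measurableSet_le (μ.measurable_rnDeriv ν) measurable_const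
  calc μ W ≤ μ (W ∩ E) + μ (W \ E) := measure_le_inter_add_sdiff μ W E
    _ ≤ ENNReal.ofReal (Real.exp ε) * ν W + μ Eᶜ := by
        gcongr
        · exact Measure.measure_inter_setOf_rnDeriv_le hac _ W
        · exact Set.sdiff_subset_compl W E
    _ ≤ ENNReal.ofReal (Real.exp ε) * ν W + ENNReal.ofReal δ := by
        gcongr
        exact prob_compl_le_ofReal_of_ofReal_one_sub_le hE.nullMeasurableSet h

/-- A high-probability bound on the privacy loss (the Radon–Nikodym
derivative `dμ/dν` is at most `e^ε` with `μ`-probability at least `1 - δ`)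
implies `(ε, δ)`-indistinguishability: `μ(W) ≤ e^ε · ν(W) + δ` for every
measurable `W`. -/
theorem plrv_bound_implies_indistinguishability
    {Ω : Type*} [MeasurableSpace Ω]
    (μ ν : Measure Ω) [IsProbabilityMeasure μ] [IsProbabilityMeasure ν]
    (hac : μ ≪ ν) (ε δ : ℝ) (hδ : δ ∈ Set.Icc (0 : ℝ) 1)
    (h : ENNReal.ofReal (1 - δ) ≤
      μ {ω | μ.rnDeriv ν ω ≤ ENNReal.ofReal (Real.exp ε)}) :
    ∀ W : Set Ω, MeasurableSet W →
      μ W ≤ ENNReal.ofReal (Real.exp ε) * ν W + ENNReal.ofReal δ :=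
  plrv_bound_implies_indistinguishability_general μ ν hac ε δ h
end

section
/- In the finite two-mechanism model with strictly positive kernels, with D_[2], D_{1,2}, P_[2], P_{1,2}, J_[2], J_{1,2} and the expected cross-entropy loss CEL defined as above, the inequality CEL(J_[2]) ≤ CEL(J_{1,2}) holds, with equality if and only if J_[2](s|y1,y2) = J_{1,2}(s|y1,y2) for all s, y1, y2. -/
open Finset

noncomputable section

/-- True joint conditional density of the two-mechanism composition. -/
def Dcomp {S X Y1 Y2 : Type*} [Fintype X]
    (γ1 : X → Y1 → ℝ) (γ2 : X → Y2 → ℝ) (p : S → X → ℝ)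
    (s : S) (y1 : Y1) (y2 : Y2) : ℝ :=
  ∑ x, γ1 x y1 * γ2 x y2 * p s x

/-- Effective marginal density of a single mechanism. -/
def psiEff {S X Y : Type*} [Fintype X]
    (γ : X → Y → ℝ) (p : S → X → ℝ) (s : S) (y : Y) : ℝ :=
  ∑ x, γ x y * p s x

/-- Product (independent-marginals) model of the composition. -/
def Dprod {S X Y1 Y2 : Type*} [Fintype X]
    (γ1 : X → Y1 → ℝ) (γ2 : X → Y2 → ℝ) (p : S → X → ℝ)
    (s : S) (y1 : Y1) (y2 : Y2) : ℝ :=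
  psiEff γ1 p s y1 * psiEff γ2 p s y2

/-- Evidence (marginal likelihood) of the true composed model. -/
def Pcomp {S X Y1 Y2 : Type*} [Fintype S] [Fintype X]
    (γ1 : X → Y1 → ℝ) (γ2 : X → Y2 → ℝ) (p : S → X → ℝ) (pS : S → ℝ)
    (y1 : Y1) (y2 : Y2) : ℝ :=
  ∑ s, Dcomp γ1 γ2 p s y1 y2 * pS s

/-- Evidence (marginal likelihood) of the product model. -/
def Pprod {S X Y1 Y2 : Type*} [Fintype S] [Fintype X]
    (γ1 : X → Y1 → ℝ) (γ2 : X → Y2 → ℝ) (p : S → X → ℝ) (pS : S → ℝ)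
    (y1 : Y1) (y2 : Y2) : ℝ :=
  ∑ s, Dprod γ1 γ2 p s y1 y2 * pS s

/-- Posterior of the true composed model. -/
def Jcomp {S X Y1 Y2 : Type*} [Fintype S] [Fintype X]
    (γ1 : X → Y1 → ℝ) (γ2 : X → Y2 → ℝ) (p : S → X → ℝ) (pS : S → ℝ)
    (s : S) (y1 : Y1) (y2 : Y2) : ℝ :=
  Dcomp γ1 γ2 p s y1 y2 * pS s / Pcomp γ1 γ2 p pS y1 y2

/-- Posterior of the product model. -/
def Jprod {S X Y1 Y2 : Type*} [Fintype S] [Fintype X]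
    (γ1 : X → Y1 → ℝ) (γ2 : X → Y2 → ℝ) (p : S → X → ℝ) (pS : S → ℝ)
    (s : S) (y1 : Y1) (y2 : Y2) : ℝ :=
  Dprod γ1 γ2 p s y1 y2 * pS s / Pprod γ1 γ2 p pS y1 y2

/-- Expected cross-entropy loss of an inference strategy `σ`. -/
def CEL {S X Y1 Y2 : Type*} [Fintype S] [Fintype X] [Fintype Y1] [Fintype Y2]
    (pS : S → ℝ) (p : S → X → ℝ) (γ1 : X → Y1 → ℝ) (γ2 : X → Y2 → ℝ)
    (σ : S → Y1 → Y2 → ℝ) : ℝ :=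
  -∑ s, ∑ x, ∑ y1, ∑ y2,
    pS s * p s x * γ1 x y1 * γ2 x y2 * Real.log (σ s y1 y2)

/-!
Both losses are expectations under the true joint law of `(s, y1, y2)`, so
`CEL σ = -∑_y P_[2](y) ∑_s J_[2](s|y) log σ(s|y)`. Hence `CEL(J_{1,2}) - CEL(J_[2])` is the
`P_[2]`-average of the Kullback–Leibler divergences `KL(J_[2](·|y) ‖ J_{1,2}(·|y))`, which are
nonnegative by Gibbs' inequality and vanish only when the two posteriors agree. Gibbs' inequality
comes from `a log (a / b) = b klFun (a / b) + a - b` and `klFun ≥ 0` with equality only at `1`.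
-/

open Real InformationTheory

theorem mul_klFun_div {a b : ℝ} (ha : 0 ≤ a) (hb : 0 < b) :
    b * klFun (a / b) = a * log a - a * log b + b - a := by
  rcases ha.eq_or_lt with rfl | ha
  · simp [klFun]
  rw [klFun, log_div ha.ne' hb.ne']
  field_simp

section Gibbs

variable {ι : Type*} [Fintype ι] {a b : ι → ℝ}

theorem sum_mul_log_sub_sum_mul_log_eq (ha : ∀ i, 0 ≤ a i) (hb : ∀ i, 0 < b i)
    (hab : ∑ i, a i = ∑ i, b i) :
    ∑ i, a i * log (a i) - ∑ i, a i * log (b i) = ∑ i, b i * klFun (a i / b i) := by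
  simp only [mul_klFun_div (ha _) (hb _), sum_add_distrib, sum_sub_distrib, hab]
  ring

theorem sum_mul_log_le_sum_mul_log (ha : ∀ i, 0 ≤ a i) (hb : ∀ i, 0 < b i)
    (hab : ∑ i, a i = ∑ i, b i) :
    ∑ i, a i * log (b i) ≤ ∑ i, a i * log (a i) := by
  have hgap := sum_mul_log_sub_sum_mul_log_eq ha hb hab
  have hgap_nonneg : 0 ≤ ∑ i, b i * klFun (a i / b i) :=
    sum_nonneg fun i _ => mul_nonneg (hb i).le (klFun_nonneg (div_nonneg (ha i) (hb i).le))
  linarith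

theorem sum_mul_log_eq_sum_mul_log_iff (ha : ∀ i, 0 ≤ a i) (hb : ∀ i, 0 < b i)
    (hab : ∑ i, a i = ∑ i, b i) :
    ∑ i, a i * log (b i) = ∑ i, a i * log (a i) ↔ a = b := by
  rw [eq_comm, ← sub_eq_zero, sum_mul_log_sub_sum_mul_log_eq ha hb hab,
    Fintype.sum_eq_zero_iff_of_nonneg fun i =>
      mul_nonneg (hb i).le (klFun_nonneg (div_nonneg (ha i) (hb i).le)), funext_iff, funext_iff]
  refine forall_congr' fun i => ?_
  simp only [Pi.zero_apply, mul_eq_zero, (hb i).ne', false_or,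
    klFun_eq_zero_iff (div_nonneg (ha i) (hb i).le), div_eq_one_iff_eq (hb i).ne']

end Gibbs

theorem sum_mul_pos_of_sum_pos {ι R : Type*} [Fintype ι] [Semiring R] [LinearOrder R]
    [IsStrictOrderedRing R] {f g : ι → R} (hf : ∀ i, 0 < f i) (hg : ∀ i, 0 ≤ g i) (hg_sum : 0 < ∑ i, g i) : 0 < ∑ i, f i * g i := by
  obtain ⟨i, -, hi⟩ := exists_lt_of_sum_lt (f := fun _ => (0 : R)) (by simpa using hg_sum)
  exact sum_pos' (fun j _ => mul_nonneg (hf j).le (hg j)) ⟨i, mem_univ i, mul_pos (hf i) hi⟩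

theorem Fintype.sum_sum_eq_sum_sum_iff_of_le {α β M : Type*} [Fintype α] [Fintype β]
    [AddCommMonoid M] [PartialOrder M] [IsOrderedCancelAddMonoid M] {f g : α → β → M}
    (h : ∀ a b, f a b ≤ g a b) :
    ∑ a, ∑ b, f a b = ∑ a, ∑ b, g a b ↔ ∀ a b, f a b = g a b := by
  rw [sum_eq_sum_iff_of_le fun a _ => sum_le_sum fun b _ => h a b]
  simp only [mem_univ, forall_const, sum_eq_sum_iff_of_le fun b _ => h _ b]

section Normalization

variable {ι K : Type*} [Fintype ι] [Field K] {w : ι → K}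

theorem sum_div_sum_self (hW : ∑ j, w j ≠ 0) : ∑ i, w i / ∑ j, w j = 1 := by
  rw [← sum_div, div_self hW]

theorem sum_mul_eq_sum_mul_sum_div (hW : ∑ j, w j ≠ 0) (c : ι → K) :
    ∑ i, w i * c i = (∑ j, w j) * ∑ i, w i / (∑ j, w j) * c i := by
  rw [mul_sum]
  exact sum_congr rfl fun i _ => by field_simp

end Normalization

section Posterior

variable {S : Type*} [Fintype S] {w v : S → ℝ}

theorem sum_mul_log_div_sum_le (hw : ∀ s, 0 < w s) (hv : ∀ s, 0 < v s) :
    ∑ s, w s * log (v s / ∑ t, v t) ≤ ∑ s, w s * log (w s / ∑ t, w t) := by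
  rcases isEmpty_or_nonempty S with _ | _
  · simp
  have hW := sum_pos (fun s _ => hw s) univ_nonempty
  have hV := sum_pos (fun s _ => hv s) univ_nonempty
  rw [sum_mul_eq_sum_mul_sum_div hW.ne', sum_mul_eq_sum_mul_sum_div hW.ne']
  refine mul_le_mul_of_nonneg_left ?_ hW.le
  exact sum_mul_log_le_sum_mul_log (fun s => (div_pos (hw s) hW).le) (fun s => div_pos (hv s) hV)
    (by rw [sum_div_sum_self hW.ne', sum_div_sum_self hV.ne'])

theorem sum_mul_log_div_sum_eq_iff (hw : ∀ s, 0 < w s) (hv : ∀ s, 0 < v s) :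
    ∑ s, w s * log (v s / ∑ t, v t) = ∑ s, w s * log (w s / ∑ t, w t) ↔
      ∀ s, w s / ∑ t, w t = v s / ∑ t, v t := by
  rcases isEmpty_or_nonempty S with _ | _
  · simp
  have hW := sum_pos (fun s _ => hw s) univ_nonempty
  have hV := sum_pos (fun s _ => hv s) univ_nonempty
  rw [sum_mul_eq_sum_mul_sum_div hW.ne', sum_mul_eq_sum_mul_sum_div hW.ne',
    mul_right_inj' hW.ne', ← funext_iff]
  exact sum_mul_log_eq_sum_mul_log_iff (fun s => (div_pos (hw s) hW).le)
    (fun s => div_pos (hv s) hV) (by rw [sum_div_sum_self hW.ne', sum_div_sum_self hV.ne'])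

end Posterior

section Positivity

variable {S X Y Y1 Y2 : Type*} [Fintype X] {p : S → X → ℝ} {s : S}

theorem psiEff_pos {γ : X → Y → ℝ} (hγ : ∀ x y, 0 < γ x y) (hp : ∀ x, 0 ≤ p s x)
    (hp_sum : 0 < ∑ x, p s x) (y : Y) : 0 < psiEff γ p s y :=
  sum_mul_pos_of_sum_pos (hγ · y) hp hp_sum

theorem Dcomp_pos {γ1 : X → Y1 → ℝ} {γ2 : X → Y2 → ℝ} (hγ1 : ∀ x y, 0 < γ1 x y)
    (hγ2 : ∀ x y, 0 < γ2 x y) (hp : ∀ x, 0 ≤ p s x) (hp_sum : 0 < ∑ x, p s x) (y1 : Y1)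
    (y2 : Y2) : 0 < Dcomp γ1 γ2 p s y1 y2 :=
  sum_mul_pos_of_sum_pos (fun x => mul_pos (hγ1 x y1) (hγ2 x y2)) hp hp_sum

theorem Dprod_pos {γ1 : X → Y1 → ℝ} {γ2 : X → Y2 → ℝ} (hγ1 : ∀ x y, 0 < γ1 x y)
    (hγ2 : ∀ x y, 0 < γ2 x y) (hp : ∀ x, 0 ≤ p s x) (hp_sum : 0 < ∑ x, p s x) (y1 : Y1)
    (y2 : Y2) : 0 < Dprod γ1 γ2 p s y1 y2 :=
  mul_pos (psiEff_pos hγ1 hp hp_sum y1) (psiEff_pos hγ2 hp hp_sum y2)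

end Positivity

theorem CEL_eq_neg_sum_Dcomp_mul {S X Y1 Y2 : Type*} [Fintype S] [Fintype X] [Fintype Y1]
    [Fintype Y2] (pS : S → ℝ) (p : S → X → ℝ) (γ1 : X → Y1 → ℝ) (γ2 : X → Y2 → ℝ)
    (σ : S → Y1 → Y2 → ℝ) :
    CEL pS p γ1 γ2 σ = -∑ y1, ∑ y2, ∑ s, Dcomp γ1 γ2 p s y1 y2 * pS s * log (σ s y1 y2) := by
  simp only [CEL, Dcomp, sum_mul]
  congr 1
  calc _ = ∑ s, ∑ y1, ∑ y2, ∑ x,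
          γ1 x y1 * γ2 x y2 * p s x * pS s * log (σ s y1 y2) := by
        refine sum_congr rfl fun s _ => ?_
        rw [sum_comm]
        refine sum_congr rfl fun y1 _ => ?_
        rw [sum_comm]
        exact sum_congr rfl fun y2 _ => sum_congr rfl fun x _ => by ring
    _ = _ := by
        rw [sum_comm]
        exact sum_congr rfl fun y1 _ => sum_comm

theorem cel_true_posterior_le_product_posterior_general
    {S X Y1 Y2 : Type*} [Fintype S] [Fintype X] [Fintype Y1] [Fintype Y2]
    (pS : S → ℝ) (p : S → X → ℝ) (γ1 : X → Y1 → ℝ) (γ2 : X → Y2 → ℝ)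
    (hpS_pos : ∀ s, 0 < pS s)
    (hp_nonneg : ∀ s x, 0 ≤ p s x) (hp_sum : ∀ s, ∑ x, p s x = 1)
    (hγ1_pos : ∀ x y, 0 < γ1 x y)
    (hγ2_pos : ∀ x y, 0 < γ2 x y) :
    CEL pS p γ1 γ2 (Jcomp γ1 γ2 p pS) ≤ CEL pS p γ1 γ2 (Jprod γ1 γ2 p pS) ∧
    (CEL pS p γ1 γ2 (Jcomp γ1 γ2 p pS) = CEL pS p γ1 γ2 (Jprod γ1 γ2 p pS) ↔
      ∀ (s : S) (y1 : Y1) (y2 : Y2),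
        Jcomp γ1 γ2 p pS s y1 y2 = Jprod γ1 γ2 p pS s y1 y2) := by
  have hp_sum_pos (s : S) : 0 < ∑ x, p s x := hp_sum s ▸ one_pos
  have hw (y1 : Y1) (y2 : Y2) (s : S) : 0 < Dcomp γ1 γ2 p s y1 y2 * pS s :=
    mul_pos (Dcomp_pos hγ1_pos hγ2_pos (hp_nonneg s) (hp_sum_pos s) y1 y2) (hpS_pos s)
  have hv (y1 : Y1) (y2 : Y2) (s : S) : 0 < Dprod γ1 γ2 p s y1 y2 * pS s :=
    mul_pos (Dprod_pos hγ1_pos hγ2_pos (hp_nonneg s) (hp_sum_pos s) y1 y2) (hpS_pos s)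
  -- `Jcomp` and `Jprod` unfold to `w s / ∑ t, w t` and `v s / ∑ t, v t` for these weights.
  have hle (y1 : Y1) (y2 : Y2) := sum_mul_log_div_sum_le (hw y1 y2) (hv y1 y2)
  have heq_iff (y1 : Y1) (y2 : Y2) := sum_mul_log_div_sum_eq_iff (hw y1 y2) (hv y1 y2)
  simp only [CEL_eq_neg_sum_Dcomp_mul, neg_le_neg_iff, neg_inj]
  refine ⟨sum_le_sum fun y1 _ => sum_le_sum fun y2 _ => hle y1 y2, ?_⟩
  rw [eq_comm]
  exact (Fintype.sum_sum_eq_sum_sum_iff_of_le hle).trans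
    ⟨fun h s y1 y2 => (heq_iff y1 y2).1 (h y1 y2) s,
      fun h y1 y2 => (heq_iff y1 y2).2 fun s => h s y1 y2⟩

/-- Lemma `KL_divergence_and_CEL`: the expected cross-entropy loss of the
true posterior is at most that of the product-model posterior, with equality
iff the two posteriors coincide. -/
theorem cel_true_posterior_le_product_posterior
    {S X Y1 Y2 : Type*} [Fintype S] [Fintype X] [Fintype Y1] [Fintype Y2]
    (pS : S → ℝ) (p : S → X → ℝ) (γ1 : X → Y1 → ℝ) (γ2 : X → Y2 → ℝ)
    (hpS_pos : ∀ s, 0 < pS s) (hpS_sum : ∑ s, pS s = 1)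
    (hp_nonneg : ∀ s x, 0 ≤ p s x) (hp_sum : ∀ s, ∑ x, p s x = 1)
    (hγ1_pos : ∀ x y, 0 < γ1 x y) (hγ1_sum : ∀ x, ∑ y, γ1 x y = 1)
    (hγ2_pos : ∀ x y, 0 < γ2 x y) (hγ2_sum : ∀ x, ∑ y, γ2 x y = 1) :
    CEL pS p γ1 γ2 (Jcomp γ1 γ2 p pS) ≤ CEL pS p γ1 γ2 (Jprod γ1 γ2 p pS) ∧
    (CEL pS p γ1 γ2 (Jcomp γ1 γ2 p pS) = CEL pS p γ1 γ2 (Jprod γ1 γ2 p pS) ↔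
      ∀ (s : S) (y1 : Y1) (y2 : Y2),
        Jcomp γ1 γ2 p pS s y1 y2 = Jprod γ1 γ2 p pS s y1 y2) :=
  cel_true_posterior_le_product_posterior_general pS p γ1 γ2 hpS_pos hp_nonneg hp_sum hγ1_pos
    hγ2_pos

end
end

section
/- Probability integral transform: let μ be a Borel probability measure on ℝ and let F : ℝ → ℝ, F(x) = μ((−∞, x]), be its cumulative distribution function. If F is continuous, then the pushforward measure of μ under F is the uniform probability distribution on [0,1] (Lebesgue measure restricted to the interval [0,1]). -/
/-! Since `F` is continuous and monotone, each sublevel set `{F ≤ y}` with `y < 1` is a closed,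
bounded lower set, hence empty or a ray `(-∞, x]` with `F x = y`. Its `μ`-measure is therefore
`F x = y`, which is the distribution function of the uniform law on `[0, 1]`. -/

open MeasureTheory Set Filter ProbabilityTheory

theorem Monotone.exists_preimage_Iic_eq_Iic {α β : Type*}
    [ConditionallyCompleteLinearOrder α] [TopologicalSpace α] [OrderTopology α]
    [DenselyOrdered α] [NoMaxOrder α]
    [LinearOrder β] [TopologicalSpace β] [OrderClosedTopology β]
    {f : α → β} (hmono : Monotone f) (hf : Continuous f) {y : β}
    (hne : (f ⁻¹' Iic y).Nonempty) (hbdd : BddAbove (f ⁻¹' Iic y)) :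
    ∃ x, f x = y ∧ f ⁻¹' Iic y = Iic x := by
  set s := sSup (f ⁻¹' Iic y)
  have hs : f s ≤ y := (isClosed_Iic.preimage hf).csSup_mem hne hbdd
  have hS : f ⁻¹' Iic y = Iic s :=
    Subset.antisymm (fun x hx => le_csSup hbdd hx) fun x hx => (hmono hx).trans hs
  refine ⟨s, le_antisymm hs <| _root_.ge_of_tendsto (hf.continuousWithinAt (s := Ioi s)) ?_, hS⟩
  filter_upwards [self_mem_nhdsWithin] with t (ht : s < t)
  by_contra! h
  exact ht.not_ge (hS ▸ h.le : t ∈ Iic s)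

theorem Real.volume_Iic_inter_Icc_zero_one (y : ℝ) :
    volume (Iic y ∩ Icc (0 : ℝ) 1) = ENNReal.ofReal (min y 1) := by
  have : Iic y ∩ Icc (0 : ℝ) 1 = Icc 0 (min y 1) := by
    ext x
    simp only [mem_inter_iff, mem_Iic, mem_Icc, le_min_iff]
    tauto
  rw [this, Real.volume_Icc, sub_zero]

namespace ProbabilityTheory

variable (μ : Measure ℝ) [IsProbabilityMeasure μ]

theorem measure_preimage_cdf_Iic_of_lt_one (hcont : Continuous (cdf μ)) {y : ℝ} (hy : y < 1) :
    μ (cdf μ ⁻¹' Iic y) = ENNReal.ofReal y := by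
  rcases (cdf μ ⁻¹' Iic y).eq_empty_or_nonempty with hempty | hne
  · have hy0 : y ≤ 0 := by
      by_contra! hy0
      obtain ⟨x, hx⟩ := ((tendsto_cdf_atBot μ).eventually (eventually_lt_nhds hy0)).exists
      exact hempty.subset (show x ∈ cdf μ ⁻¹' Iic y from hx.le)
    rw [hempty, measure_empty, ENNReal.ofReal_of_nonpos hy0]
  · have hbdd : BddAbove (cdf μ ⁻¹' Iic y) := by
      obtain ⟨b, hb⟩ :=
        ((tendsto_cdf_atTop μ).eventually (eventually_gt_nhds hy)).exists_forall_of_atTop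
      exact ⟨b, fun x hx => by_contra fun hxb => (hx.trans_lt (hb x (le_of_not_ge hxb))).false⟩
    obtain ⟨x, hx, hpre⟩ := (monotone_cdf μ).exists_preimage_Iic_eq_Iic hcont hne hbdd
    rw [hpre, ← ofReal_cdf, hx]

theorem measure_preimage_cdf_Iic (hcont : Continuous (cdf μ)) (y : ℝ) :
    μ (cdf μ ⁻¹' Iic y) = ENNReal.ofReal (min y 1) := by
  rcases lt_or_ge y 1 with hy | hy
  · rw [min_eq_left hy.le, measure_preimage_cdf_Iic_of_lt_one μ hcont hy]
  · have : cdf μ ⁻¹' Iic y = univ := eq_univ_of_forall fun x => (cdf_le_one μ x).trans hy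
    rw [this, min_eq_right hy, measure_univ, ENNReal.ofReal_one]

end ProbabilityTheory

/-- Probability integral transform: if the cumulative distribution function
`F` of a Borel probability measure `μ` on `ℝ` is continuous, then the
pushforward of `μ` under `F` is the uniform distribution on `[0,1]`. -/
theorem probability_integral_transform
    (μ : Measure ℝ) [IsProbabilityMeasure μ]
    (F : ℝ → ℝ) (hF : ∀ x, F x = (μ (Set.Iic x)).toReal)
    (hcont : Continuous F) :
    Measure.map F μ = volume.restrict (Set.Icc (0 : ℝ) 1) := by
  obtain rfl : F = cdf μ := funext fun x => by rw [hF, cdf_eq_real, measureReal_def]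
  refine Measure.ext_of_Iic _ _ fun y => ?_
  rw [Measure.map_apply (monotone_cdf μ).measurable measurableSet_Iic,
    Measure.restrict_apply measurableSet_Iic, measure_preimage_cdf_Iic μ hcont,
    Real.volume_Iic_inter_Icc_zero_one]
end
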